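/- arXiv:1702.01237 — 5 statements merged into one kernel-verified Lean document; each statement's English description precedes it below -/
import Mathlib

section
/- In T_cas, the formula R(x, y) witnesses non-lowness: for every k < ω there exists an indiscernible sequence (b_m : m < ω) of elements of I_k (namely distinct elements of I_k in a model) such that {R(x, b_m) : m < ω} is k-consistent but (k+1)-inconsistent. -/
/-- A model of Casanovas's theory `T_cas`. -/
structure CasModel (M : Type u) where
  P : Set M
  In : ℕ → Set M
  R : M → M → Prop
  P_inf : P.Infinite
  In_inf : ∀ n, (In n).Infinite
  In_sub : ∀ n, In n ⊆ Pᶜ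
  In_disj : ∀ m n, m ≠ n → Disjoint (In m) (In n)
  R_dom : ∀ a b, R a b → a ∈ P ∧ b ∈ Pᶜ
  count_fin : ∀ a ∈ P, ∀ n : ℕ, {b | b ∈ In n ∧ R a b}.Finite
  count : ∀ a ∈ P, ∀ n : ℕ, {b | b ∈ In n ∧ R a b}.ncard = n
  ext1 : ∀ B0 B1 : Finset M, ↑B0 ⊆ (Pᶜ : Set M) → ↑B1 ⊆ (Pᶜ : Set M) → Disjoint B0 B1 →
    (∀ n : ℕ, ((B1 : Set M) ∩ In n).ncard ≤ n) →
    ∃ a ∈ P, (∀ b ∈ B1, R a b) ∧ (∀ b ∈ B0, ¬ R a b)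
  ext2 : ∀ A0 A1 : Finset M, ↑A0 ⊆ P → ↑A1 ⊆ P → Disjoint A0 A1 →
    ∃ b ∈ (Pᶜ : Set M), (∀ a ∈ A1, R a b) ∧ (∀ a ∈ A0, ¬ R a b)

/-- In `T_cas`, the formula `R(x,y)` witnesses non-lowness: for every `k` there is a
sequence of distinct elements of `I_k` (which is an indiscernible sequence) such that
`{R(x, b_m) : m < ω}` is `k`-consistent but `(k+1)`-inconsistent. -/
theorem stmt_8 {M : Type u} (C : CasModel M) (k : ℕ) :
    ∃ b : ℕ → M, Function.Injective b ∧ (∀ m, b m ∈ C.In k) ∧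
      (∀ S : Finset ℕ, S.card ≤ k → ∃ a ∈ C.P, ∀ m ∈ S, C.R a (b m)) ∧
      (∀ S : Finset ℕ, k + 1 ≤ S.card → ¬ ∃ a ∈ C.P, ∀ m ∈ S, C.R a (b m)) := by
  classical
  have e := (C.In_inf k).natEmbedding
  refine ⟨fun n => (e n : M), fun m n h => e.injective (Subtype.ext h),
    fun m => (e m).2, ?_, ?_⟩
  · intro S hS
    have hsub : (↑(S.image fun m => (e m : M)) : Set M) ⊆ C.In k := by
      intro x hx
      simp only [Finset.coe_image, Set.mem_image, Finset.mem_coe] at hx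
      obtain ⟨m, _, rfl⟩ := hx
      exact (e m).2
    obtain ⟨a, ha, h1, _⟩ := C.ext1 ∅ (S.image fun m => (e m : M))
      (by simp) (fun x hx => C.In_sub k (hsub hx)) (Finset.disjoint_empty_left _)
      (fun n => by
        rcases eq_or_ne n k with rfl | hne
        · calc ((↑(S.image fun m => (e m : M)) : Set M) ∩ C.In n).ncard
              ≤ (↑(S.image fun m => (e m : M)) : Set M).ncard :=
                Set.ncard_le_ncard Set.inter_subset_left (Finset.finite_toSet _)
            _ ≤ S.card := by
                rw [Set.ncard_coe_finset]; exact Finset.card_image_le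
            _ ≤ n := hS
        · have : (↑(S.image fun m => (e m : M)) : Set M) ∩ C.In n = ∅ := by
            apply Set.eq_empty_of_forall_notMem
            intro x ⟨hx1, hx2⟩
            exact (C.In_disj k n (Ne.symm hne)).le_bot ⟨hsub hx1, hx2⟩
          rw [Finset.coe_image] at this; simp [Finset.coe_image, this])
    exact ⟨a, ha, fun m hm => h1 _ (Finset.mem_image_of_mem _ hm)⟩
  · rintro S hS ⟨a, ha, hR⟩
    have hsub : (↑(S.image fun m => (e m : M)) : Set M) ⊆
        {x | x ∈ C.In k ∧ C.R a x} := by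
      intro x hx
      simp only [Finset.coe_image, Set.mem_image, Finset.mem_coe] at hx
      obtain ⟨m, hm, rfl⟩ := hx
      exact ⟨(e m).2, hR m hm⟩
    have hcard : (S.image fun m => (e m : M)).card = S.card :=
      Finset.card_image_of_injective _ (fun m n h => e.injective (Subtype.ext h))
    have := Set.ncard_le_ncard hsub (C.count_fin a ha k)
    rw [Set.ncard_coe_finset, hcard, C.count a ha k] at this
    omega
end

section
/- The theory of dense linear orders without endpoints, Th(ℚ, <), does not have the finite dividing property: for every formula φ(x, ȳ) there is k such that for every indiscernible sequence (b̄_m : m < ω), if {φ(x, b̄_m) : m < ω} is k-consistent then it is consistent. -/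
open FirstOrder

attribute [local instance] FirstOrder.Language.orderStructure

namespace Stmt9Aux


lemma qlt {a b : ℚ} : cmp a b = Ordering.lt ↔ a < b := cmp_eq_lt_iff _ _
lemma qeq {a b : ℚ} : cmp a b = Ordering.eq ↔ a = b := cmp_eq_eq_iff _ _
lemma qgt {a b : ℚ} : cmp a b = Ordering.gt ↔ b < a := cmp_eq_gt_iff _ _

lemma sm1 (i : ℕ) : StrictMono (fun _ : Fin 1 => i) :=
  fun a b h => absurd (Subsingleton.elim a b) h.ne

lemma sm2 {i i' : ℕ} (h : i < i') : StrictMono (![i, i'] : Fin 2 → ℕ) := by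
  intro a b hab
  fin_cases a <;> fin_cases b <;>
    simp_all [Matrix.cons_val_zero, Matrix.cons_val_one, Matrix.head_cons]

/-- code of a comparison, `gt ↦ 0`, `eq ↦ 1`, `lt ↦ 2`. -/
def ordCode : Ordering → ℕ
  | .gt => 0
  | .eq => 1
  | .lt => 2

lemma ordCode_le_two (o : Ordering) : ordCode o ≤ 2 := by cases o <;> simp [ordCode]

lemma ordCode_inj {o o' : Ordering} (h : ordCode o = ordCode o') : o = o' := by
  cases o <;> cases o' <;> simp_all [ordCode]

lemma code_mono {x u v : ℚ} (huv : u ≤ v) : ordCode (cmp x u) ≤ ordCode (cmp x v) := by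
  rcases lt_trichotomy x u with h|h|h <;> rcases lt_trichotomy x v with h'|h'|h'
  · rw [qlt.2 h, qlt.2 h']
  · linarith
  · linarith
  · rw [qeq.2 h, qlt.2 h']; decide
  · rw [qeq.2 h, qeq.2 h']
  · linarith
  · rw [qgt.2 h]; exact Nat.zero_le _
  · rw [qgt.2 h]; exact Nat.zero_le _
  · rw [qgt.2 h]; exact Nat.zero_le _

lemma cmp_betw {x u v w : ℚ} (h1 : u ≤ w) (h2 : w ≤ v) (h : cmp x u = cmp x v) :
    cmp x w = cmp x u := by
  rcases lt_trichotomy x u with hh|hh|hh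
  · rw [qlt.2 hh]; exact qlt.2 (lt_of_lt_of_le hh h1)
  · have hv : x = v := qeq.1 (h.symm.trans (qeq.2 hh))
    have hwx : w = x := le_antisymm (hv ▸ h2) (hh ▸ h1)
    rw [qeq.2 hh]; exact qeq.2 hwx.symm
  · have hv : v < x := qgt.1 (h.symm.trans (qgt.2 hh))
    rw [qgt.2 hh]; exact qgt.2 (lt_of_le_of_lt h2 hv)




/-- Extend a pattern-preserving partial map to an order automorphism of `ℚ`. -/
lemma exists_fixing_iso {n : ℕ} (c : Fin n → ℚ) (x z : ℚ)
    (h : ∀ j, cmp x (c j) = cmp z (c j)) :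
    ∃ g : ℚ ≃o ℚ, g x = z ∧ ∀ j, g (c j) = c j := by
  by_cases hx : ∃ j, x = c j
  · obtain ⟨j, hj⟩ := hx
    have h1 : cmp x (c j) = Ordering.eq := qeq.2 hj
    have h2 : z = c j := qeq.1 ((h j).symm.trans h1)
    exact ⟨OrderIso.refl ℚ, by simp [hj, h2], fun _ => rfl⟩
  push_neg at hx
  set C : Set ℚ := {t | ∀ j, cmp t (c j) = cmp x (c j)} with hC
  have hxC : x ∈ C := fun j => rfl
  have hzC : z ∈ C := fun j => by
    have := h j
    rcases lt_trichotomy x (c j) with h'|h'|h'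
    · rw [qlt.2 h'] at this ⊢; exact this.symm
    · exact absurd h' (hx j)
    · rw [qgt.2 h'] at this ⊢; exact this.symm
  -- order convexity
  have hconv : ∀ s ∈ C, ∀ t ∈ C, ∀ u, s ≤ u → u ≤ t → u ∈ C := by
    intro s hs t ht u hsu hut j
    rcases lt_trichotomy x (c j) with h'|h'|h'
    · have htj : t < c j := qlt.1 ((ht j).trans (qlt.2 h'))
      exact (qlt.2 (lt_of_le_of_lt hut htj)).trans (qlt.2 h').symm
    · exact absurd h' (hx j)
    · have hsj : c j < s := qgt.1 ((hs j).trans (qgt.2 h'))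
      exact (qgt.2 (lt_of_lt_of_le hsj hsu)).trans (qgt.2 h').symm
  haveI : Nonempty C := ⟨⟨x, hxC⟩⟩
  haveI : DenselyOrdered C := by
    constructor
    rintro ⟨s, hs⟩ ⟨t, ht⟩ hst
    rw [Subtype.mk_lt_mk] at hst
    refine ⟨⟨(s + t) / 2, hconv s hs t ht _ (by linarith) (by linarith)⟩, ?_, ?_⟩ <;>
      · rw [Subtype.mk_lt_mk]; linarith
  haveI : NoMaxOrder C := by
    constructor
    rintro ⟨t, ht⟩
    by_cases hU : ((Finset.univ.filter (fun j => x < c j)).image c).Nonempty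
    · obtain ⟨j0, hj0, hj0'⟩ := Finset.mem_image.1
        (((Finset.univ.filter (fun j => x < c j)).image c).min'_mem hU)
      rw [Finset.mem_filter] at hj0
      have hmin : ∀ j', x < c j' → c j0 ≤ c j' := by
        intro j' hj'
        rw [hj0']
        exact Finset.min'_le _ _ (Finset.mem_image.2
          ⟨j', Finset.mem_filter.2 ⟨Finset.mem_univ _, hj'⟩, rfl⟩)
      have htm : t < c j0 := qlt.1 ((ht j0).trans (qlt.2 hj0.2))
      have hmem : (t + c j0) / 2 ∈ C := by
        intro j
        rcases lt_trichotomy x (c j) with h'|h'|h'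
        · have := hmin j h'
          rw [qlt.2 h', qlt]; linarith
        · exact absurd h' (hx j)
        · have htj : c j < t := qgt.1 ((ht j).trans (qgt.2 h'))
          rw [qgt.2 h', qgt]; linarith
      exact ⟨⟨(t + c j0) / 2, hmem⟩, by rw [Subtype.mk_lt_mk]; linarith⟩
    · have hmem : t + 1 ∈ C := by
        intro j
        rcases lt_trichotomy x (c j) with h'|h'|h'
        · exact absurd ⟨c j, Finset.mem_image.2
            ⟨j, Finset.mem_filter.2 ⟨Finset.mem_univ _, h'⟩, rfl⟩⟩ hU
        · exact absurd h' (hx j)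
        · have htj : c j < t := qgt.1 ((ht j).trans (qgt.2 h'))
          rw [qgt.2 h', qgt]; linarith
      exact ⟨⟨t + 1, hmem⟩, by rw [Subtype.mk_lt_mk]; linarith⟩
  haveI : NoMinOrder C := by
    constructor
    rintro ⟨t, ht⟩
    by_cases hU : ((Finset.univ.filter (fun j => c j < x)).image c).Nonempty
    · obtain ⟨j0, hj0, hj0'⟩ := Finset.mem_image.1
        (((Finset.univ.filter (fun j => c j < x)).image c).max'_mem hU)
      rw [Finset.mem_filter] at hj0
      have hmax : ∀ j', c j' < x → c j' ≤ c j0 := by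
        intro j' hj'
        rw [hj0']
        exact Finset.le_max' _ _ (Finset.mem_image.2
          ⟨j', Finset.mem_filter.2 ⟨Finset.mem_univ _, hj'⟩, rfl⟩)
      have htm : c j0 < t := qgt.1 ((ht j0).trans (qgt.2 hj0.2))
      have hmem : (c j0 + t) / 2 ∈ C := by
        intro j
        rcases lt_trichotomy x (c j) with h'|h'|h'
        · have htj : t < c j := qlt.1 ((ht j).trans (qlt.2 h'))
          rw [qlt.2 h', qlt]; linarith
        · exact absurd h' (hx j)
        · have := hmax j h'
          rw [qgt.2 h', qgt]; linarith
      exact ⟨⟨(c j0 + t) / 2, hmem⟩, by rw [Subtype.mk_lt_mk]; linarith⟩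
    · have hmem : t - 1 ∈ C := by
        intro j
        rcases lt_trichotomy x (c j) with h'|h'|h'
        · have htj : t < c j := qlt.1 ((ht j).trans (qlt.2 h'))
          rw [qlt.2 h', qlt]; linarith
        · exact absurd h' (hx j)
        · exact absurd ⟨c j, Finset.mem_image.2
            ⟨j, Finset.mem_filter.2 ⟨Finset.mem_univ _, h'⟩, rfl⟩⟩ hU
      exact ⟨⟨t - 1, hmem⟩, by rw [Subtype.mk_lt_mk]; linarith⟩
  obtain ⟨e⟩ : Nonempty (C ≃o ℚ) := Order.iso_of_countable_dense C ℚ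
  set δ : ℚ := e ⟨z, hzC⟩ - e ⟨x, hxC⟩ with hδ
  set G : ℚ → ℚ := fun t => if h : t ∈ C then (e.symm (e ⟨t, h⟩ + δ) : ℚ) else t with hG
  have hGin : ∀ t (h : t ∈ C), G t = (e.symm (e ⟨t, h⟩ + δ) : ℚ) := fun t h => by
    rw [hG]; simp only [dif_pos h]
  have hGmem : ∀ t (h : t ∈ C), G t ∈ C := by
    intro t h
    rw [hGin t h]
    exact (e.symm (e ⟨t, h⟩ + δ)).2
  have hGout : ∀ t, t ∉ C → G t = t := fun t h => by rw [hG]; simp only [dif_neg h]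
  have hmono : StrictMono G := by
    intro s t hst
    by_cases hs : s ∈ C <;> by_cases ht : t ∈ C
    · rw [hGin s hs, hGin t ht]
      have : (⟨s, hs⟩ : C) < ⟨t, ht⟩ := Subtype.mk_lt_mk.2 hst
      exact Subtype.coe_lt_coe.2 (e.symm.strictMono (by linarith [e.strictMono this]))
    · rw [hGout t ht]
      by_contra hc
      push_neg at hc
      exact ht (hconv s hs _ (hGmem s hs) t hst.le hc)
    · rw [hGout s hs]
      by_contra hc
      push_neg at hc
      exact hs (hconv _ (hGmem t ht) t ht s hc hst.le)
    · rw [hGout s hs, hGout t ht]; exact hst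
  have hsurj : Function.Surjective G := by
    intro y
    by_cases hy : y ∈ C
    · refine ⟨(e.symm (e ⟨y, hy⟩ - δ) : ℚ), ?_⟩
      rw [hGin _ (e.symm (e ⟨y, hy⟩ - δ)).2]
      have : (⟨((e.symm (e ⟨y, hy⟩ - δ)) : ℚ), (e.symm (e ⟨y, hy⟩ - δ)).2⟩ : C)
          = e.symm (e ⟨y, hy⟩ - δ) := Subtype.coe_eta _ _
      rw [this, OrderIso.apply_symm_apply, sub_add_cancel, OrderIso.symm_apply_apply]
    · exact ⟨y, hGout y hy⟩
  refine ⟨StrictMono.orderIsoOfSurjective G hmono hsurj, ?_, ?_⟩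
  · show G x = z
    rw [hGin x hxC]
    have : e ⟨x, hxC⟩ + δ = e ⟨z, hzC⟩ := by rw [hδ]; ring
    rw [this, OrderIso.symm_apply_apply]
  · intro j
    show G (c j) = c j
    refine hGout _ ?_
    intro hc
    have h1 := hc j
    rw [cmp_self_eq_eq] at h1
    rcases lt_trichotomy x (c j) with h'|h'|h'
    · rw [qlt.2 h'] at h1; exact absurd h1 (by decide)
    · exact hx j h'
    · rw [qgt.2 h'] at h1; exact absurd h1 (by decide)



open Language

instance : Language.order.OrderedStructure ℚ := ⟨fun _ => Iff.rfl⟩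

variable {γ : Type*}

/-- variable term -/
def tvar (a : γ) : Language.order.Term (γ ⊕ Fin 0) := Term.var (Sum.inl a)

/-- atomic order-comparison formula -/
def ordForm (p : Ordering) (a b : γ) : Language.order.Formula γ :=
  match p with
  | .lt => Term.lt (tvar a) (tvar b)
  | .eq => Term.bdEqual (tvar a) (tvar b)
  | .gt => Term.lt (tvar b) (tvar a)

lemma realize_ordForm {p : Ordering} {a b : γ} {v : γ → ℚ} :
    (ordForm p a b).Realize v ↔ cmp (v a) (v b) = p := by
  cases p <;>
    simp [ordForm, tvar, Formula.Realize, Term.realize_lt, BoundedFormula.realize_bdEqual,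
      cmp_eq_lt_iff, cmp_eq_eq_iff, cmp_eq_gt_iff]

/-- conjunction of pattern conditions -/
noncomputable def pattForm {n : ℕ} (p : Fin n → Ordering) (a : γ) (cv : Fin n → γ) :
    Language.order.Formula γ :=
  BoundedFormula.iInf (fun j => ordForm (p j) a (cv j))

lemma realize_pattForm {n : ℕ} {p : Fin n → Ordering} {a : γ} {cv : Fin n → γ} {v : γ → ℚ} :
    (pattForm p a cv).Realize v ↔ ∀ j, cmp (v a) (v (cv j)) = p j := by
  rw [pattForm, Formula.Realize, BoundedFormula.realize_iInf]
  exact ⟨fun h j => realize_ordForm.1 (h j),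
    fun h j => realize_ordForm.2 (h j)⟩

lemma fin1_eq (i : Fin 1 → ℚ) (a : Fin 1) : i a = i 0 := congrArg i (Subsingleton.elim a 0)

/-- `∃ w, φ(w, ȳ₀) ∧ patt(w, ȳ₀) = p`, as a formula in one `n`-tuple of variables -/
noncomputable def nuForm (n : ℕ) (φ : Language.order.Formula (Fin 1 ⊕ Fin n))
    (p : Fin n → Ordering) : Language.order.Formula (Fin 1 × Fin n) :=
  Formula.iExs (Fin 1)
    ((φ.relabel (Sum.elim (fun i => Sum.inr i) (fun j => Sum.inl ((0 : Fin 1), j))) ⊓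
      pattForm p (Sum.inr (0 : Fin 1)) (fun j => Sum.inl ((0 : Fin 1), j))) :
      Language.order.Formula ((Fin 1 × Fin n) ⊕ Fin 1))

lemma realize_nuForm {n : ℕ} {φ : Language.order.Formula (Fin 1 ⊕ Fin n)}
    {p : Fin n → Ordering} {v : Fin 1 × Fin n → ℚ} :
    (nuForm n φ p).Realize v ↔
      ∃ w : ℚ, φ.Realize (Sum.elim (fun _ => w) (fun j => v (0, j))) ∧
        ∀ j, cmp w (v (0, j)) = p j := by
  rw [nuForm, Formula.realize_iExs]
  have key : ∀ (i : Fin 1 → ℚ) (a : (Fin 1 × Fin n) ⊕ Fin 1),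
      Sum.elim v i (id a) = Sum.elim v i a := fun _ _ => rfl
  constructor
  · rintro ⟨i, hi⟩
    rw [Formula.realize_inf, Formula.realize_relabel, realize_pattForm] at hi
    refine ⟨i 0, ?_, ?_⟩
    · have heq : (Sum.elim v i) ∘
          (Sum.elim (fun i => Sum.inr i) (fun j => Sum.inl ((0 : Fin 1), j)) :
            (Fin 1 ⊕ Fin n) → ((Fin 1 × Fin n) ⊕ Fin 1)) =
          Sum.elim (fun _ => i 0) (fun j => v (0, j)) := by
        funext a
        rcases a with a | j
        · simp [fin1_eq i a]
        · simp
      rw [heq] at hi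
      exact hi.1
    · exact fun j => hi.2 j
  · rintro ⟨w, hw1, hw2⟩
    refine ⟨fun _ => w, ?_⟩
    rw [Formula.realize_inf, Formula.realize_relabel, realize_pattForm]
    constructor
    · have heq : (Sum.elim v (fun _ => w)) ∘
          (Sum.elim (fun i => Sum.inr i) (fun j => Sum.inl ((0 : Fin 1), j)) :
            (Fin 1 ⊕ Fin n) → ((Fin 1 × Fin n) ⊕ Fin 1)) =
          Sum.elim (fun _ => w) (fun j => v (0, j)) := by
        funext a
        rcases a with a | j <;> simp
      rw [heq]
      exact hw1
    · exact fun j => hw2 j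

/-- `∃ w, patt(w, ȳ₀) = p ∧ patt(w, ȳ₁) = p`, in two `n`-tuples of variables -/
noncomputable def muForm (n : ℕ) (p : Fin n → Ordering) :
    Language.order.Formula (Fin 2 × Fin n) :=
  Formula.iExs (Fin 1)
    ((pattForm p (Sum.inr (0 : Fin 1)) (fun j => Sum.inl ((0 : Fin 2), j)) ⊓
      pattForm p (Sum.inr (0 : Fin 1)) (fun j => Sum.inl ((1 : Fin 2), j))) :
      Language.order.Formula ((Fin 2 × Fin n) ⊕ Fin 1))

lemma realize_muForm {n : ℕ} {p : Fin n → Ordering} {v : Fin 2 × Fin n → ℚ} :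
    (muForm n p).Realize v ↔
      ∃ w : ℚ, (∀ j, cmp w (v (0, j)) = p j) ∧ ∀ j, cmp w (v (1, j)) = p j := by
  rw [muForm, Formula.realize_iExs]
  constructor
  · rintro ⟨i, hi⟩
    rw [Formula.realize_inf, realize_pattForm, realize_pattForm] at hi
    exact ⟨i 0, fun j => hi.1 j, fun j => hi.2 j⟩
  · rintro ⟨w, h1, h2⟩
    refine ⟨fun _ => w, ?_⟩
    rw [Formula.realize_inf, realize_pattForm, realize_pattForm]
    exact ⟨fun j => h1 j, fun j => h2 j⟩

end Stmt9Aux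

open Stmt9Aux in
/-- `Th(ℚ, <)` does not have the finite dividing property: for every formula `φ(x, ȳ)`
of the language of orders there is a `k` such that for every `∅`-indiscernible sequence
`(b̄_m : m < ω)` in `ℚ`, if `{φ(x, b̄_m) : m < ω}` is `k`-consistent then it is consistent
(i.e., by compactness, every finite subset is satisfiable). -/
theorem stmt_9 (n : ℕ) (φ : Language.order.Formula (Fin 1 ⊕ Fin n)) :
    ∃ k : ℕ, ∀ b : ℕ → Fin n → ℚ,
      -- (b̄_m : m < ω) is indiscernible over ∅:
      (∀ (j : ℕ) (f g : Fin j → ℕ), StrictMono f → StrictMono g →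
        ∀ ψ : Language.order.Formula (Fin j × Fin n),
          (ψ.Realize (fun p => b (f p.1) p.2) ↔ ψ.Realize (fun p => b (g p.1) p.2))) →
      -- k-consistency:
      (∀ S : Finset ℕ, S.card ≤ k →
        ∃ x : ℚ, ∀ m ∈ S, φ.Realize (Sum.elim (fun _ => x) (b m))) →
      -- consistency:
      (∀ S : Finset ℕ, ∃ x : ℚ, ∀ m ∈ S, φ.Realize (Sum.elim (fun _ => x) (b m))) := by
  classical
  refine ⟨2 * n + 2, ?_⟩
  intro b hind hk
  -- the comparison of corresponding coordinates is determined by the first pair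
  have hpair : ∀ (j : Fin n) (i i' : ℕ), i < i' →
      cmp (b i j) (b i' j) = cmp (b 0 j) (b 1 j) := by
    intro j i i' hii
    have key := hind 2 ![i, i'] ![0, 1] (sm2 hii) (sm2 one_pos)
      (ordForm (cmp (b 0 j) (b 1 j)) ((0 : Fin 2), j) ((1 : Fin 2), j))
    rw [realize_ordForm, realize_ordForm] at key
    simp only [Matrix.cons_val_zero, Matrix.cons_val_one, Matrix.head_cons] at key
    exact key.2 trivial
  -- witness for the first 2n+2 instances
  obtain ⟨x, hx⟩ := hk (Finset.range (2 * n + 2)) (by simp)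
  have hx' : ∀ m, m < 2 * n + 2 → φ.Realize (Sum.elim (fun _ => x) (b m)) :=
    fun m hm => hx m (Finset.mem_range.2 hm)
  -- monotone encoding of the comparison pattern of x along the sequence
  set e : ℕ → Fin n → ℕ := fun i j =>
    if cmp (b 0 j) (b 1 j) = Ordering.gt then 2 - ordCode (cmp x (b i j))
    else ordCode (cmp x (b i j)) with he
  have hemono : ∀ (j : Fin n) (i i' : ℕ), i < i' → e i j ≤ e i' j := by
    intro j i i' hii
    have hp := hpair j i i' hii
    rw [he]
    by_cases hd : cmp (b 0 j) (b 1 j) = Ordering.gt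
    · simp only [if_pos hd]
      have hble : b i' j ≤ b i j := le_of_lt (qgt.1 (hp.trans hd))
      have h1 := code_mono (x := x) hble
      have c2 := ordCode_le_two (cmp x (b i j))
      have c2' := ordCode_le_two (cmp x (b i' j))
      omega
    · simp only [if_neg hd]
      have hble : b i j ≤ b i' j := by
        by_contra hcon
        push_neg at hcon
        exact hd (hp.symm.trans (qgt.2 hcon))
      exact code_mono hble
  have heeq : ∀ (j : Fin n) (i i' : ℕ), i < i' → e i j = e i' j →
      cmp x (b i j) = cmp x (b i' j) := by
    intro j i i' hii heq
    rw [he] at heq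
    by_cases hd : cmp (b 0 j) (b 1 j) = Ordering.gt
    · simp only [if_pos hd] at heq
      have c2 := ordCode_le_two (cmp x (b i j))
      have c2' := ordCode_le_two (cmp x (b i' j))
      exact ordCode_inj (by omega)
    · simp only [if_neg hd] at heq
      exact ordCode_inj heq
  set T : ℕ → ℕ := fun i => ∑ j : Fin n, e i j with hT
  have hTmono : ∀ i i', i ≤ i' → T i ≤ T i' := by
    intro i i' hii
    rcases eq_or_lt_of_le hii with rfl|h
    · exact le_rfl
    · exact Finset.sum_le_sum fun j _ => hemono j i i' h
  have hTle : ∀ i, T i ≤ 2 * n := by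
    intro i
    calc T i ≤ ∑ _j : Fin n, 2 := by
          refine Finset.sum_le_sum fun j _ => ?_
          by_cases hd : cmp (b 0 j) (b 1 j) = Ordering.gt
          · simp only [he, if_pos hd]
            omega
          · simp only [he, if_neg hd]
            exact ordCode_le_two _
    _ = 2 * n := by simp [mul_comm]
  -- pigeonhole: two consecutive identical patterns
  have hpig : ∃ i, i < 2 * n + 1 ∧ T i = T (i + 1) := by
    by_contra hc
    push_neg at hc
    have hstep : ∀ i, i < 2 * n + 1 → T i + 1 ≤ T (i + 1) := fun i hi =>
      lt_of_le_of_ne (hTmono i (i + 1) (Nat.le_succ _)) (hc i hi)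
    have hgr : ∀ i, i ≤ 2 * n + 1 → i ≤ T i := by
      intro i
      induction i with
      | zero => exact fun _ => Nat.zero_le _
      | succ m ih =>
        intro hm
        have h1 := hstep m (by omega)
        have h2 := ih (by omega)
        omega
    have h3 := hgr (2 * n + 1) le_rfl
    have h4 := hTle (2 * n + 1)
    omega
  obtain ⟨i, hi, hTi⟩ := hpig
  have hej : ∀ j, cmp x (b i j) = cmp x (b (i + 1) j) := by
    intro j
    refine heeq j i (i + 1) (Nat.lt_succ_self _) ?_
    exact (Finset.sum_eq_sum_iff_of_le
      (fun j _ => hemono j i (i + 1) (Nat.lt_succ_self _))).1 hTi j (Finset.mem_univ _)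
  set p : Fin n → Ordering := fun j => cmp x (b i j) with hp0
  -- the witness-with-pattern statement transfers to every index
  have hnu : ∀ m : ℕ, ∃ w : ℚ,
      φ.Realize (Sum.elim (fun _ => w) (b m)) ∧ ∀ j, cmp w (b m j) = p j := by
    intro m
    have key := hind 1 (fun _ => i) (fun _ => m) (sm1 i) (sm1 m) (nuForm n φ p)
    rw [realize_nuForm, realize_nuForm] at key
    obtain ⟨w, hw1, hw2⟩ := key.1 ⟨x, hx' i (by omega), fun j => rfl⟩
    exact ⟨w, hw1, hw2⟩
  intro S
  rcases S.eq_empty_or_nonempty with rfl|hS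
  · exact ⟨0, by simp⟩
  set M := S.max' hS + 1 with hM
  -- a common point for the endpoints, via indiscernibility
  have hmu : ∃ z : ℚ, (∀ j, cmp z (b 0 j) = p j) ∧ ∀ j, cmp z (b M j) = p j := by
    have key := hind 2 ![i, i + 1] ![0, M] (sm2 (Nat.lt_succ_self i)) (sm2 (by omega))
      (muForm n p)
    rw [realize_muForm, realize_muForm] at key
    simp only [Matrix.cons_val_zero, Matrix.cons_val_one, Matrix.head_cons] at key
    exact key.1 ⟨x, fun j => rfl, fun j => (hej j).symm⟩
  obtain ⟨z, hz0, hzM⟩ := hmu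
  -- the common point has pattern p at every index up to M
  have hzm : ∀ m, m ≤ M → ∀ j, cmp z (b m j) = p j := by
    intro m hm j
    rcases Nat.eq_zero_or_pos m with rfl|hm0
    · exact hz0 j
    rcases eq_or_lt_of_le hm with rfl|hmM
    · exact hzM j
    have h0m := hpair j 0 m hm0
    have hmM' := hpair j m M hmM
    rcases hd : cmp (b 0 j) (b 1 j) with _|_|_
    · have h1 : b 0 j ≤ b m j := (qlt.1 (h0m.trans hd)).le
      have h2 : b m j ≤ b M j := (qlt.1 (hmM'.trans hd)).le
      exact (cmp_betw h1 h2 ((hz0 j).trans (hzM j).symm)).trans (hz0 j)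
    · have h1 : b 0 j = b m j := qeq.1 (h0m.trans hd)
      rw [← h1]; exact hz0 j
    · have h1 : b M j ≤ b m j := (qgt.1 (hmM'.trans hd)).le
      have h2 : b m j ≤ b 0 j := (qgt.1 (h0m.trans hd)).le
      exact (cmp_betw h1 h2 ((hzM j).trans (hz0 j).symm)).trans (hzM j)
  refine ⟨z, fun m hmS => ?_⟩
  have hmM : m ≤ M := by have := S.le_max' m hmS; omega
  obtain ⟨w, hw1, hw2⟩ := hnu m
  have hcmp : ∀ j, cmp w (b m j) = cmp z (b m j) :=
    fun j => (hw2 j).trans (hzm m hmM j).symm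
  obtain ⟨g, hg1, hg2⟩ := exists_fixing_iso (b m) w z hcmp
  have h2 := (Language.StrongHomClass.realize_formula g φ
    (v := Sum.elim (fun _ => w) (b m))).2 hw1
  have heq2 : ⇑g ∘ (Sum.elim (fun _ => w) (b m) : Fin 1 ⊕ Fin n → ℚ) =
      (Sum.elim (fun _ => z) (b m) : Fin 1 ⊕ Fin n → ℚ) := by
    funext a
    rcases a with a|j
    · simp [hg1]
    · simp [hg2 j]
  rwa [heq2] at h2
end

section
/- Let B be a complete Boolean algebra with a <σ-closed dense subset, σ regular uncountable. Fix a family (e_{α,β} : α, β < λ) of elements of B behaving like equality Boolean values (symmetric, e_{α,α} = 1, and transitive: e_{α,β} ∧ e_{β,γ} ≤ e_{α,γ}). Say a nonzero a ∈ B is strong for s ∈ [λ]^{<σ} if for all α ∈ s, letting β ≤ α be least with a ∧ e_{α,β} ≠ 0, we have β ∈ s and a ≤ e_{α,β}. Then for every s ∈ [λ]^{<σ} and every nonzero a ∈ B, there exist t ⊇ s with t ∈ [λ]^{<σ} and a nonzero b ≤ a such that b is strong for t. -/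
open Cardinal

/-- `a` is strong for `s` (w.r.t. the Boolean equality-values `e`): for each `α ∈ s`,
the least `β ≤ α` with `a ⊓ e α β ≠ ⊥` lies in `s` and satisfies `a ≤ e α β`. -/
def IsStrongFor {B : Type u} [BooleanAlgebra B] {L : Type u} [LinearOrder L]
    (e : L → L → B) (a : B) (s : Set L) : Prop :=
  ∀ α ∈ s, ∃ β ∈ s, IsLeast {γ | γ ≤ α ∧ a ⊓ e α γ ≠ ⊥} β ∧ a ≤ e α β

section Aux

universe v

variable {B : Type v} [CompleteBooleanAlgebra B]

open Classical in
/-- Auxiliary decreasing sequence of conditions meeting the open dense sets `O i`. -/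
noncomputable def gseq {ι : Type v} [LinearOrder ι] [WellFoundedLT ι]
    (D : Set B) (O : ι → Set B) (d₀ : B) : ι → B :=
  (wellFounded_lt (α := ι)).fix (C := fun _ => B) (fun i ih =>
    if h : ∃ d, d ∈ D ∧ d ≤ d₀ ∧ (∀ j, ∀ hj : j < i, d ≤ ih j hj) ∧ d ∈ O i
    then h.choose else d₀)

open Classical in
theorem gseq_eq {ι : Type v} [LinearOrder ι] [WellFoundedLT ι]
    (D : Set B) (O : ι → Set B) (d₀ : B) (i : ι) :
    gseq D O d₀ i =
      if h : ∃ d, d ∈ D ∧ d ≤ d₀ ∧ (∀ j, ∀ _ : j < i, d ≤ gseq D O d₀ j) ∧ d ∈ O i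
      then h.choose else d₀ :=
  WellFounded.fix_eq _ _ _

theorem gseq_spec {σ : Cardinal.{v}} {D : Set B}
    (hclosed : ∀ (κ : Type v) (_ : LinearOrder κ), #κ < σ →
      ∀ f : κ → B, (∀ i, f i ∈ D) → Antitone f → ∃ d ∈ D, ∀ i, d ≤ f i)
    {ι : Type v} [LinearOrder ι] [WellFoundedLT ι] (hι : #ι < σ)
    (O : ι → Set B)
    (hdenseO : ∀ i, ∀ d ∈ D, ∃ d' ∈ O i, d' ∈ D ∧ d' ≤ d)
    {d₀ : B} (hd₀ : d₀ ∈ D) (i : ι) :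
    gseq D O d₀ i ∈ D ∧ gseq D O d₀ i ≤ d₀ ∧
      (∀ j, j < i → gseq D O d₀ i ≤ gseq D O d₀ j) ∧ gseq D O d₀ i ∈ O i := by
  induction i using (wellFounded_lt (α := ι)).induction with
  | _ i IH =>
    have hex : ∃ d, d ∈ D ∧ d ≤ d₀ ∧ (∀ j, ∀ _ : j < i, d ≤ gseq D O d₀ j) ∧ d ∈ O i := by
      by_cases hne : ∃ j, j < i
      · obtain ⟨c, hcD, hc⟩ := hclosed (↥(Set.Iio i)) inferInstance
          (lt_of_le_of_lt (Cardinal.mk_set_le _) hι)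
          (fun j => gseq D O d₀ j.1)
          (fun j => (IH j.1 j.2).1)
          (fun j k hjk => by
            rcases eq_or_lt_of_le hjk with h | h
            · rw [h]
            · exact (IH k.1 k.2).2.2.1 j.1 (Subtype.coe_lt_coe.2 h))
        obtain ⟨j0, hj0⟩ := hne
        have hcd₀ : c ≤ d₀ := (hc ⟨j0, hj0⟩).trans (IH j0 hj0).2.1
        obtain ⟨d, hdO, hdD, hdc⟩ := hdenseO i c hcD
        exact ⟨d, hdD, hdc.trans hcd₀, fun j hj => hdc.trans (hc ⟨j, hj⟩), hdO⟩
      · obtain ⟨d, hdO, hdD, hdc⟩ := hdenseO i d₀ hd₀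
        exact ⟨d, hdD, hdc, fun j hj => absurd ⟨j, hj⟩ hne, hdO⟩
    rw [gseq_eq, dif_pos hex]
    exact hex.choose_spec

/-- Meeting fewer than `σ` open dense subsets of a `<σ`-closed dense set. -/
theorem meet_open_dense {σ : Cardinal.{v}} {D : Set B}
    (hclosed : ∀ (κ : Type v) (_ : LinearOrder κ), #κ < σ →
      ∀ f : κ → B, (∀ i, f i ∈ D) → Antitone f → ∃ d ∈ D, ∀ i, d ≤ f i)
    {ι : Type v} [LinearOrder ι] [WellFoundedLT ι] (hι : #ι < σ)
    (O : ι → Set B)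
    (hdenseO : ∀ i, ∀ d ∈ D, ∃ d' ∈ O i, d' ∈ D ∧ d' ≤ d)
    (hopenO : ∀ i, ∀ x ∈ O i, ∀ y ∈ D, y ≤ x → y ∈ O i)
    {d₀ : B} (hd₀ : d₀ ∈ D) :
    ∃ d ∈ D, d ≤ d₀ ∧ ∀ i, d ∈ O i := by
  rcases isEmpty_or_nonempty ι with h | h
  · exact ⟨d₀, hd₀, le_rfl, fun i => h.elim i⟩
  · obtain ⟨c, hcD, hc⟩ := hclosed ι inferInstance hι (gseq D O d₀)
      (fun i => (gseq_spec hclosed hι O hdenseO hd₀ i).1)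
      (fun i j hij => by
        rcases eq_or_lt_of_le hij with h' | h'
        · rw [h']
        · exact (gseq_spec hclosed hι O hdenseO hd₀ j).2.2.1 i h')
    obtain ⟨i0⟩ := h
    exact ⟨c, hcD, (hc i0).trans (gseq_spec hclosed hι O hdenseO hd₀ i0).2.1,
      fun i => hopenO i _ (gseq_spec hclosed hι O hdenseO hd₀ i).2.2.2 c hcD (hc i)⟩

end Aux

section Round

universe v

variable {B : Type v} [CompleteBooleanAlgebra B] {L : Type v} [LinearOrder L]
  [WellFoundedLT L] {σ : Cardinal.{v}}

/-- One round: shrink `d` so that every `α ∈ u` becomes handled, collecting the least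
witnesses in a small set `v`. -/
theorem round_lemma {D : Set B} (hbot : ⊥ ∉ D)
    (hdense : ∀ a : B, a ≠ ⊥ → ∃ d ∈ D, d ≤ a)
    (hclosed : ∀ (κ : Type v) (_ : LinearOrder κ), #κ < σ →
      ∀ f : κ → B, (∀ i, f i ∈ D) → Antitone f → ∃ d ∈ D, ∀ i, d ≤ f i)
    (e : L → L → B) (hrefl : ∀ α, e α α = ⊤)
    (u : Set L) (hu : #u < σ) {d : B} (hd : d ∈ D) :
    ∃ d' ∈ D, d' ≤ d ∧ ∃ v : Set L, #v ≤ #u ∧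
      ∀ α ∈ u, ∃ β ∈ v, IsLeast {γ | γ ≤ α ∧ d' ⊓ e α γ ≠ ⊥} β ∧ d' ≤ e α β := by
  classical
  set O : ↥u → Set B := fun α =>
    {x | x ∈ D ∧ ∃ β, β ≤ (α : L) ∧ x ≤ e (α : L) β ∧ ∀ γ < β, x ⊓ e (α : L) γ = ⊥} with hO
  have hdenseO : ∀ α : ↥u, ∀ x ∈ D, ∃ x' ∈ O α, x' ∈ D ∧ x' ≤ x := by
    intro α x hx
    have hxne : x ≠ ⊥ := fun h => hbot (h ▸ hx)
    have hmem : (α : L) ∈ {γ | γ ≤ (α : L) ∧ x ⊓ e (α : L) γ ≠ ⊥} := by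
      refine ⟨le_rfl, ?_⟩
      rw [hrefl, inf_top_eq]; exact hxne
    obtain ⟨β, hβmem, hβmin⟩ := (wellFounded_lt (α := L)).has_min _ ⟨_, hmem⟩
    obtain ⟨x', hx'D, hx'le⟩ := hdense (x ⊓ e (α : L) β) hβmem.2
    refine ⟨x', ⟨hx'D, β, hβmem.1, hx'le.trans inf_le_right, fun γ hγ => ?_⟩, hx'D,
      hx'le.trans inf_le_left⟩
    have hγα : γ ≤ (α : L) := le_of_lt (lt_of_lt_of_le hγ hβmem.1)
    have : x ⊓ e (α : L) γ = ⊥ := by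
      by_contra hne
      exact hβmin γ ⟨hγα, hne⟩ hγ
    have hle2 : x' ⊓ e (α : L) γ ≤ ⊥ := this ▸ inf_le_inf_right _ (hx'le.trans inf_le_left)
    exact le_bot_iff.mp hle2
  have hopenO : ∀ α : ↥u, ∀ x ∈ O α, ∀ y ∈ D, y ≤ x → y ∈ O α := by
    rintro α x ⟨-, β, hβα, hxe, hbelow⟩ y hyD hyx
    exact ⟨hyD, β, hβα, hyx.trans hxe, fun γ hγ =>
      le_bot_iff.mp ((hbelow γ hγ) ▸ inf_le_inf_right _ hyx)⟩
  obtain ⟨d', hd'D, hd'd, hd'O⟩ := meet_open_dense hclosed hu O hdenseO hopenO hd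
  have hd'ne : d' ≠ ⊥ := fun h => hbot (h ▸ hd'D)
  have key : ∀ α : ↥u, ∃ β, (IsLeast {γ | γ ≤ (α : L) ∧ d' ⊓ e (α : L) γ ≠ ⊥} β ∧
      d' ≤ e (α : L) β) := by
    intro α
    obtain ⟨-, β, hβα, hle, hbelow⟩ := hd'O α
    refine ⟨β, ⟨⟨hβα, ?_⟩, ?_⟩, hle⟩
    · rw [inf_eq_left.mpr hle]; exact hd'ne
    · intro γ hγ
      by_contra hlt
      exact hγ.2 (hbelow γ (lt_of_not_ge hlt))
  refine ⟨d', hd'D, hd'd, Set.range (fun α : ↥u => (key α).choose),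
    Cardinal.mk_range_le, fun α hα => ?_⟩
  exact ⟨(key ⟨α, hα⟩).choose, ⟨⟨α, hα⟩, rfl⟩, (key ⟨α, hα⟩).choose_spec⟩

end Round

/-- In a complete Boolean algebra with a `<σ`-closed dense subset (`σ` regular
uncountable), given Boolean equality-values `e` (reflexive, symmetric, transitive),
below every nonzero `a` and above every `s ∈ [λ]^{<σ}` there are a nonzero `b ≤ a`
and `t ⊇ s` with `t ∈ [λ]^{<σ}` such that `b` is strong for `t`. -/
theorem stmt_11 {B : Type u} [CompleteBooleanAlgebra B] {L : Type u} [LinearOrder L]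
    [WellFoundedLT L] {σ : Cardinal.{u}}
    (hσ : σ.IsRegular) (hσω : ℵ₀ < σ)
    (D : Set B) (hbot : ⊥ ∉ D)
    (hdense : ∀ a : B, a ≠ ⊥ → ∃ d ∈ D, d ≤ a)
    (hclosed : ∀ (ι : Type u) (_ : LinearOrder ι), #ι < σ →
      ∀ f : ι → B, (∀ i, f i ∈ D) → Antitone f → ∃ d ∈ D, ∀ i, d ≤ f i)
    (e : L → L → B)
    (hrefl : ∀ α, e α α = ⊤) (hsymm : ∀ α β, e α β = e β α)
    (htrans : ∀ α β γ, e α β ⊓ e β γ ≤ e α γ)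
    (s : Set L) (hs : #s < σ) (a : B) (ha : a ≠ ⊥) :
    ∃ t : Set L, s ⊆ t ∧ #t < σ ∧ ∃ b ≤ a, b ≠ ⊥ ∧ IsStrongFor e b t := by
  classical
  obtain ⟨d₀, hd₀D, hd₀a⟩ := hdense a ha
  have step : ∀ p : {p : B × Set L // p.1 ∈ D ∧ #p.2 < σ ∧ s ⊆ p.2},
      ∃ q : {p : B × Set L // p.1 ∈ D ∧ #p.2 < σ ∧ s ⊆ p.2},
      q.1.1 ≤ p.1.1 ∧ p.1.2 ⊆ q.1.2 ∧ ∀ α ∈ p.1.2, ∃ β ∈ q.1.2,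
        IsLeast {γ | γ ≤ α ∧ q.1.1 ⊓ e α γ ≠ ⊥} β ∧ q.1.1 ≤ e α β := by
    rintro ⟨⟨d, t⟩, hdD, ht, hst⟩
    obtain ⟨d', hd'D, hd'd, v, hv, hhandle⟩ :=
      round_lemma hbot hdense hclosed e hrefl t ht hdD
    refine ⟨⟨(d', t ∪ v), hd'D, ?_, hst.trans Set.subset_union_left⟩, hd'd,
      Set.subset_union_left, fun α hα => ?_⟩
    · exact lt_of_le_of_lt (Cardinal.mk_union_le _ _)
        (Cardinal.add_lt_of_lt hσ.aleph0_le ht (lt_of_le_of_lt hv ht))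
    · obtain ⟨β, hβv, h1, h2⟩ := hhandle α hα
      exact ⟨β, Set.subset_union_right hβv, h1, h2⟩
  let F : {p : B × Set L // p.1 ∈ D ∧ #p.2 < σ ∧ s ⊆ p.2} →
      {p : B × Set L // p.1 ∈ D ∧ #p.2 < σ ∧ s ⊆ p.2} := fun p => (step p).choose
  let seq : ℕ → {p : B × Set L // p.1 ∈ D ∧ #p.2 < σ ∧ s ⊆ p.2} :=
    fun n => F^[n] ⟨(d₀, s), hd₀D, hs, subset_rfl⟩
  have hsucc : ∀ n, seq (n + 1) = F (seq n) := fun n => Function.iterate_succ_apply' F n _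
  have hdec : ∀ n, (seq (n + 1)).1.1 ≤ (seq n).1.1 := fun n => by
    rw [hsucc]; exact (step (seq n)).choose_spec.1
  have hhand : ∀ n, ∀ α ∈ (seq n).1.2, ∃ β ∈ (seq (n + 1)).1.2,
      IsLeast {γ | γ ≤ α ∧ (seq (n + 1)).1.1 ⊓ e α γ ≠ ⊥} β ∧
        (seq (n + 1)).1.1 ≤ e α β := fun n => by
    rw [hsucc]; exact (step (seq n)).choose_spec.2.2
  have hanti : Antitone (fun n => (seq n).1.1) := antitone_nat_of_succ_le hdec
  have hcard : #(ULift.{u} ℕ) = ℵ₀ := Cardinal.mk_eq_aleph0 _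
  obtain ⟨b, hbD, hb⟩ := hclosed (ULift.{u} ℕ) inferInstance
    (by rw [hcard]; exact hσω)
    (fun n => (seq n.down).1.1) (fun n => (seq n.down).2.1)
    (fun n m hnm => hanti (show n.down ≤ m.down from hnm))
  have hbne : b ≠ ⊥ := fun h => hbot (h ▸ hbD)
  refine ⟨⋃ n : ULift.{u} ℕ, (seq n.down).1.2, ?_, ?_, b, ?_, hbne, ?_⟩
  · exact ((seq 0).2.2.2).trans
      (Set.subset_iUnion (fun n : ULift.{u} ℕ => (seq n.down).1.2) ⟨0⟩)
  · refine lt_of_le_of_lt (Cardinal.mk_iUnion_le _) ?_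
    rw [hcard]
    exact Cardinal.mul_lt_of_lt hσ.aleph0_le hσω
      (Cardinal.iSup_lt_of_isRegular hσ (by rw [hcard]; exact hσω)
        (fun n => (seq n.down).2.2.1))
  · exact (hb ⟨0⟩).trans hd₀a
  · intro α hα
    obtain ⟨n, hn⟩ := Set.mem_iUnion.mp hα
    obtain ⟨β, hβ, hleast, hle⟩ := hhand n.down α hn
    have hbd : b ≤ (seq (n.down + 1)).1.1 := hb ⟨n.down + 1⟩
    refine ⟨β, Set.mem_iUnion.mpr ⟨⟨n.down + 1⟩, hβ⟩, ⟨⟨hleast.1.1, ?_⟩, ?_⟩, hbd.trans hle⟩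
    · rw [inf_eq_left.mpr (hbd.trans hle)]; exact hbne
    · intro γ hγ
      refine hleast.2 ⟨hγ.1, fun h0 => hγ.2 ?_⟩
      exact le_bot_iff.mp (h0 ▸ inf_le_inf_right _ hbd)
end

section
/- With notation as in the definition of strongness: if a is strong for s and b is strong for t and a ∧ b ≠ 0, then the functions π_{a,s} : s → s and π_{b,t} : t → t (where π_{a,s}(α) is the least β ≤ α with a ∧ e_{α,β} ≠ 0) agree on s ∩ t. -/
/-- If `a` is strong for `s`, `b` is strong for `t`, and `a ⊓ b ≠ ⊥`, then the
projections `π_{a,s}` and `π_{b,t}` agree on `s ∩ t`: for `α ∈ s ∩ t`, the least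
`β ≤ α` with `a ⊓ e α β ≠ ⊥` equals the least `β' ≤ α` with `b ⊓ e α β' ≠ ⊥`. -/
theorem stmt_12 {B : Type u} [BooleanAlgebra B] {L : Type u} [LinearOrder L]
    (e : L → L → B)
    (hrefl : ∀ α, e α α = ⊤) (hsymm : ∀ α β, e α β = e β α)
    (htrans : ∀ α β γ, e α β ⊓ e β γ ≤ e α γ)
    (a b : B) (s t : Set L)
    (hsa : IsStrongFor e a s) (htb : IsStrongFor e b t)
    (hab : a ⊓ b ≠ ⊥)
    (α : L) (hαs : α ∈ s) (hαt : α ∈ t)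
    (βa βb : L)
    (hβa : IsLeast {γ | γ ≤ α ∧ a ⊓ e α γ ≠ ⊥} βa)
    (hβb : IsLeast {γ | γ ≤ α ∧ b ⊓ e α γ ≠ ⊥} βb) :
    βa = βb := by
  obtain ⟨β, -, hle, ha⟩ := hsa α hαs
  obtain ⟨β', -, hle', hb⟩ := htb α hαt
  have e1 : βa = β := hβa.unique hle
  have e2 : βb = β' := hβb.unique hle'
  subst e1; subst e2
  have h1 : a ⊓ b ≤ b ⊓ e α βa := le_inf inf_le_right (ha.trans' inf_le_left)
  have h2 : a ⊓ b ≤ a ⊓ e α βb := le_inf inf_le_left (hb.trans' inf_le_right)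
  have hb1 : b ⊓ e α βa ≠ ⊥ := fun h => hab (le_bot_iff.mp (h ▸ h1))
  have ha1 : a ⊓ e α βb ≠ ⊥ := fun h => hab (le_bot_iff.mp (h ▸ h2))
  exact le_antisymm (hle.2 ⟨hle'.1.1, ha1⟩) (hle'.2 ⟨hle.1.1, hb1⟩)
end

section
/- Let φ(y_α : α ∈ s) be the statement that y_α ≠ y_{α'} whenever i_α ≠ i_{α'}, and that for each m < n there is no (m+1)-element subset t of s such that all y_α (α ∈ t) are pairwise distinct, lie in I_m, and have i_α = 1. Then in any model M of T_cas, for a tuple (b_α : α ∈ s) of elements of I^M and signs (i_α : α ∈ s) ∈ {0,1}^s, there exists a ∈ P^M with R(a, b_α) ↔ (i_α = 1) for all α ∈ s, if and only if φ(b_α : α ∈ s) holds. -/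
/-- In a model of `T_cas`, for a finite tuple `(b_α : α ∈ s)` of elements of `I` and
signs `(i_α : α ∈ s)`, there exists `a ∈ P` with `R(a, b_α) ↔ i_α = 1` for all `α ∈ s`
if and only if `φ(b_α : α ∈ s)` holds, where `φ` says: `b_α ≠ b_{α'}` whenever
`i_α ≠ i_{α'}`, and for each `m < |s|` there is no `(m+1)`-element subset `t ⊆ s` on
which the `b_α` are pairwise distinct, lie in `I_m`, and have sign `i_α = 1`. -/
theorem stmt_19 {M : Type u} {ι : Type v} (C : CasModel M)
    (s : Finset ι) (b : ι → M) (i : ι → Bool)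
    (hb : ∀ α ∈ s, b α ∈ ((C.P)ᶜ : Set M)) :
    (∃ a ∈ C.P, ∀ α ∈ s, (C.R a (b α) ↔ i α = true)) ↔
      ((∀ α ∈ s, ∀ α' ∈ s, i α ≠ i α' → b α ≠ b α') ∧
       (∀ m : ℕ, m < s.card → ¬ ∃ t : Finset ι, t ⊆ s ∧ t.card = m + 1 ∧
          (∀ α ∈ t, b α ∈ C.In m ∧ i α = true) ∧
          (∀ α ∈ t, ∀ α' ∈ t, α ≠ α' → b α ≠ b α'))) := by
  classical
  constructor
  · rintro ⟨a, ha, hR⟩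
    refine ⟨?_, ?_⟩
    · intro α hα α' hα' hne heq
      apply hne
      have h1 := hR α hα
      have h2 := hR α' hα'
      rw [heq] at h1
      have : (i α = true) ↔ (i α' = true) := h1.symm.trans h2
      cases hiα : i α <;> cases hiα' : i α' <;> simp [hiα, hiα'] at this ⊢
    · rintro m hm ⟨t, hts, hcard, hprop, hinj⟩
      have hinjOn : Set.InjOn b ↑t := by
        intro x hx y hy hxy
        by_contra hne
        exact hinj x hx y hy hne hxy
      have hsub : ((t.image b : Finset M) : Set M) ⊆ {x | x ∈ C.In m ∧ C.R a x} := by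
        intro x hx
        simp only [Finset.coe_image, Set.mem_image, Finset.mem_coe] at hx
        obtain ⟨α, hα, rfl⟩ := hx
        obtain ⟨hIn, hi⟩ := hprop α hα
        exact ⟨hIn, (hR α (hts hα)).mpr hi⟩
      have hle : ((t.image b : Finset M) : Set M).ncard ≤ m := by
        rw [← C.count a ha m]
        exact Set.ncard_le_ncard hsub (C.count_fin a ha m)
      rw [Set.ncard_coe_finset, Finset.card_image_of_injOn hinjOn, hcard] at hle
      omega
  · rintro ⟨h1, h2⟩
    set s1 := s.filter (fun α => i α = true) with hs1
    set s0 := s.filter (fun α => i α = false) with hs0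
    set B1 := s1.image b with hB1
    set B0 := s0.image b with hB0
    have hB1P : (B1 : Set M) ⊆ (C.Pᶜ : Set M) := by
      intro x hx
      simp only [hB1, Finset.coe_image, Set.mem_image, Finset.mem_coe, hs1,
        Finset.mem_filter] at hx
      obtain ⟨α, ⟨hα, _⟩, rfl⟩ := hx
      exact hb α hα
    have hB0P : (B0 : Set M) ⊆ (C.Pᶜ : Set M) := by
      intro x hx
      simp only [hB0, Finset.coe_image, Set.mem_image, Finset.mem_coe, hs0,
        Finset.mem_filter] at hx
      obtain ⟨α, ⟨hα, _⟩, rfl⟩ := hx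
      exact hb α hα
    have hdisj : Disjoint B0 B1 := by
      rw [Finset.disjoint_left]
      intro x hx0 hx1
      simp only [hB0, hB1, Finset.mem_image, hs0, hs1, Finset.mem_filter] at hx0 hx1
      obtain ⟨α, ⟨hα, hiα⟩, rfl⟩ := hx0
      obtain ⟨α', ⟨hα', hiα'⟩, heq⟩ := hx1
      exact h1 α' hα' α hα (by simp [hiα, hiα']) heq
    have hcnt : ∀ n : ℕ, ((B1 : Set M) ∩ C.In n).ncard ≤ n := by
      intro n
      by_contra hgt
      push_neg at hgt
      set F : Finset M := B1.filter (fun x => x ∈ C.In n) with hF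
      have hFeq : ((B1 : Set M) ∩ C.In n) = (F : Set M) := by
        ext x; simp [hF, Finset.mem_filter, Set.mem_inter_iff]
      rw [hFeq, Set.ncard_coe_finset] at hgt
      obtain ⟨F', hF'F, hF'card⟩ := Finset.exists_subset_card_eq (s := F) (n := n + 1) hgt
      have hx : ∀ x ∈ F', ∃ α, α ∈ s ∧ i α = true ∧ b α = x := by
        intro x hxF'
        have := hF'F hxF'
        simp only [hF, Finset.mem_filter, hB1, Finset.mem_image, hs1] at this
        obtain ⟨⟨α, hα, rfl⟩, -⟩ := this
        exact ⟨α, hα.1, hα.2, rfl⟩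
      set g : {x // x ∈ F'} → ι := fun x => (hx x.1 x.2).choose with hg
      have hgspec : ∀ x : {x // x ∈ F'}, g x ∈ s ∧ i (g x) = true ∧ b (g x) = x.1 :=
        fun x => (hx x.1 x.2).choose_spec
      set t : Finset ι := F'.attach.image g with ht
      have hbg : ∀ α ∈ t, ∃ x : {x // x ∈ F'}, g x = α := by
        intro α hα
        simp only [ht, Finset.mem_image, Finset.mem_attach, true_and] at hα
        exact hα
      have hginj : Function.Injective g := by
        intro x y hxy
        have h1' := (hgspec x).2.2
        have h2' := (hgspec y).2.2
        rw [hxy, h2'] at h1'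
        exact Subtype.ext h1'.symm
      have htcard : t.card = n + 1 := by
        rw [ht, Finset.card_image_of_injective _ hginj, Finset.card_attach, hF'card]
      have hts : t ⊆ s := by
        intro α hα
        obtain ⟨x, rfl⟩ := hbg α hα
        exact (hgspec x).1
      have hnlt : n < s.card := by
        have := Finset.card_le_card hts
        omega
      apply h2 n hnlt
      refine ⟨t, hts, htcard, ?_, ?_⟩
      · intro α hα
        obtain ⟨x, rfl⟩ := hbg α hα
        have hbx := (hgspec x).2.2
        have hxF : x.1 ∈ F := hF'F x.2
        simp only [hF, Finset.mem_filter] at hxF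
        rw [hbx]
        exact ⟨hxF.2, (hgspec x).2.1⟩
      · intro α hα α' hα' hne heq
        obtain ⟨x, rfl⟩ := hbg α hα
        obtain ⟨x', rfl⟩ := hbg α' hα'
        rw [(hgspec x).2.2, (hgspec x').2.2] at heq
        exact hne (congrArg g (Subtype.ext heq))
    obtain ⟨a, ha, haR1, haR0⟩ := C.ext1 B0 B1 hB0P hB1P hdisj hcnt
    refine ⟨a, ha, ?_⟩
    intro α hα
    cases hiα : i α with
    | true =>
      simp only [iff_true]
      exact haR1 (b α) (by simp [hB1, Finset.mem_image, hs1, Finset.mem_filter]; exact ⟨α, ⟨hα, hiα⟩, rfl⟩)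
    | false =>
      simp only [Bool.false_eq_true, iff_false]
      exact haR0 (b α) (by simp [hB0, Finset.mem_image, hs0, Finset.mem_filter]; exact ⟨α, ⟨hα, hiα⟩, rfl⟩)
end
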